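/- arXiv:1904.01882 — 3 statements merged into one kernel-verified Lean document; each statement's English description precedes it below -/
import Mathlib

section
/- Let A ⊆ ℝᵈ be nonempty, closed and convex, M : ℝᵈ → ℝᵈ be monotone and continuous on A, and suppose SOL(A, M) is nonempty. For ε > 0 let y(ε) denote the unique solution of VI(A, M + ε·Id). Then ‖y(ε)‖ ≤ ‖x*‖ for every x* ∈ SOL(A, M); in particular the Tikhonov trajectory {y(ε)}_{ε>0} is uniformly bounded. -/
open RealInnerProductSpace

section TikhonovBound

variable {E : Type*} [NormedAddCommGroup E] [InnerProductSpace ℝ E]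

/-- Adding the two variational inequalities, the `M`-terms combine into
`-⟪M y - M x, y - x⟫ ≤ 0` by monotonicity, leaving only the regularization term. -/
theorem inner_sub_nonneg_of_tikhonov {M : E → E} {ε : ℝ} (hε : 0 < ε) {x y : E}
    (hmono : 0 ≤ ⟪M y - M x, y - x⟫) (hy : 0 ≤ ⟪M y + ε • y, x - y⟫)
    (hx : 0 ≤ ⟪M x, y - x⟫) : 0 ≤ ⟪y, x - y⟫ := by
  have hsplit : ⟪M y + ε • y, x - y⟫ = ⟪M y, x - y⟫ + ε * ⟪y, x - y⟫ := by
    rw [inner_add_left, real_inner_smul_left]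
  have hcombine : ⟪M y - M x, y - x⟫ = -⟪M y, x - y⟫ - ⟪M x, y - x⟫ := by
    rw [inner_sub_left, ← inner_neg_right, neg_sub]
  have hreg : 0 ≤ ε * ⟪y, x - y⟫ := by linarith
  exact nonneg_of_mul_nonneg_right hreg hε

theorem norm_le_of_inner_sub_nonneg {x y : E} (h : 0 ≤ ⟪y, x - y⟫) : ‖y‖ ≤ ‖x‖ := by
  have hsq : ‖y‖ * ‖y‖ ≤ ‖y‖ * ‖x‖ :=
    calc ‖y‖ * ‖y‖ = ⟪y, y⟫ := (real_inner_self_eq_norm_mul_norm y).symm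
      _ ≤ ⟪y, x⟫ := by rw [inner_sub_right] at h; linarith
      _ ≤ ‖y‖ * ‖x‖ := real_inner_le_norm y x
  rcases (norm_nonneg y).eq_or_lt with hy | hy
  · rw [← hy]; exact norm_nonneg x
  · exact le_of_mul_le_mul_left hsq hy

end TikhonovBound

theorem stmt_6_general {d : ℕ} (A : Set (EuclideanSpace ℝ (Fin d)))
    (M : EuclideanSpace ℝ (Fin d) → EuclideanSpace ℝ (Fin d))
    (hmono : ∀ x ∈ A, ∀ y ∈ A, 0 ≤ ⟪M x - M y, x - y⟫)
    (ε : ℝ) (hε : 0 < ε)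
    (yε : EuclideanSpace ℝ (Fin d)) (hyε : yε ∈ A)
    (hsol : ∀ y ∈ A, 0 ≤ ⟪M yε + ε • yε, y - yε⟫)
    (xstar : EuclideanSpace ℝ (Fin d)) (hxstar : xstar ∈ A)
    (hxsol : ∀ x ∈ A, 0 ≤ ⟪M xstar, x - xstar⟫) :
    ‖yε‖ ≤ ‖xstar‖ :=
  norm_le_of_inner_sub_nonneg <| inner_sub_nonneg_of_tikhonov hε
    (hmono yε hyε xstar hxstar) (hsol xstar hxstar) (hxsol yε hyε)

theorem stmt_6 {d : ℕ} (A : Set (EuclideanSpace ℝ (Fin d)))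
    (hA_ne : A.Nonempty) (hA_closed : IsClosed A) (hA_convex : Convex ℝ A)
    (M : EuclideanSpace ℝ (Fin d) → EuclideanSpace ℝ (Fin d))
    (hcont : ContinuousOn M A)
    (hmono : ∀ x ∈ A, ∀ y ∈ A, 0 ≤ ⟪M x - M y, x - y⟫)
    (ε : ℝ) (hε : 0 < ε)
    (yε : EuclideanSpace ℝ (Fin d)) (hyε : yε ∈ A)
    (hsol : ∀ y ∈ A, 0 ≤ ⟪M yε + ε • yε, y - yε⟫)
    (xstar : EuclideanSpace ℝ (Fin d)) (hxstar : xstar ∈ A)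
    (hxsol : ∀ x ∈ A, 0 ≤ ⟪M xstar, x - xstar⟫) :
    ‖yε‖ ≤ ‖xstar‖ :=
  stmt_6_general A M hmono ε hε yε hyε hsol xstar hxstar hxsol
end

section
/- Let A ⊆ ℝᵈ be nonempty, closed and convex, M : ℝᵈ → ℝᵈ be monotone and Lipschitz continuous, SOL(A, M) nonempty, and for ε > 0 let y(ε) be the unique solution of VI(A, M + ε·Id). Then for 0 < ε ≤ ε', ‖y(ε) - y(ε')‖ ≤ M_y · (ε' - ε)/ε, where M_y is any uniform bound on ‖y(ε)‖ over ε > 0. -/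
/-!
Adding the variational inequalities for `y = y(ε)` (tested at `y'`) and `y' = y(ε')` (tested
at `y`) and discarding the monotone part leaves `0 ≤ ⟪ε' y' - ε y, y - y'⟫`. Writing
`ε' y' - ε y = (ε' - ε) y' - ε (y - y')` gives `ε ‖y - y'‖² ≤ (ε' - ε) ⟪y', y - y'⟫`, and
Cauchy–Schwarz turns this into `ε ‖y - y'‖ ≤ (ε' - ε) ‖y'‖`.
-/

open RealInnerProductSpace

variable {E : Type*} [NormedAddCommGroup E] [InnerProductSpace ℝ E]

def IsVISolution (A : Set E) (F : E → E) (x : E) : Prop :=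
  x ∈ A ∧ ∀ z ∈ A, 0 ≤ ⟪F x, z - x⟫

namespace IsVISolution

variable {A : Set E} {F G M : E → E} {x y : E} {ε ε' : ℝ}

theorem inner_sub_sub_nonneg (hx : IsVISolution A F x) (hy : IsVISolution A G y) :
    0 ≤ ⟪G y - F x, x - y⟫ := by
  have hsum := add_nonneg (hx.2 y hy.1) (hy.2 x hx.1)
  have hxy : y - x = -(x - y) := (neg_sub x y).symm
  rw [hxy, inner_neg_right] at hsum
  rw [inner_sub_left]
  linarith

theorem tikhonov_mul_norm_sub_sq_le (hmono : ∀ x ∈ A, ∀ y ∈ A, 0 ≤ ⟪M x - M y, x - y⟫)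
    (hy : IsVISolution A (fun x => M x + ε • x) y)
    (hy' : IsVISolution A (fun x => M x + ε' • x) y') :
    ε * ‖y - y'‖ ^ 2 ≤ (ε' - ε) * ⟪y', y - y'⟫ := by
  have hvi := hy.inner_sub_sub_nonneg hy'
  have hm := hmono y hy.1 y' hy'.1
  have hsplit : M y' + ε' • y' - (M y + ε • y) = (ε' - ε) • y' - ε • (y - y') - (M y - M y') := by
    simp only [sub_smul, smul_sub]
    abel
  rw [hsplit, inner_sub_left, inner_sub_left, real_inner_smul_left, real_inner_smul_left,
    real_inner_self_eq_norm_sq] at hvi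
  linarith

theorem tikhonov_mul_norm_sub_le (hmono : ∀ x ∈ A, ∀ y ∈ A, 0 ≤ ⟪M x - M y, x - y⟫)
    (hy : IsVISolution A (fun x => M x + ε • x) y)
    (hy' : IsVISolution A (fun x => M x + ε' • x) y') (hεε' : ε ≤ ε') :
    ε * ‖y - y'‖ ≤ (ε' - ε) * ‖y'‖ := by
  rcases (norm_nonneg (y - y')).eq_or_lt with h0 | hpos
  · rw [← h0, mul_zero]
    exact mul_nonneg (sub_nonneg.2 hεε') (norm_nonneg _)
  · refine le_of_mul_le_mul_right ?_ hpos
    calc ε * ‖y - y'‖ * ‖y - y'‖ = ε * ‖y - y'‖ ^ 2 := by ring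
      _ ≤ (ε' - ε) * ⟪y', y - y'⟫ := tikhonov_mul_norm_sub_sq_le hmono hy hy'
      _ ≤ (ε' - ε) * (‖y'‖ * ‖y - y'‖) :=
        mul_le_mul_of_nonneg_left (real_inner_le_norm _ _) (sub_nonneg.2 hεε')
      _ = (ε' - ε) * ‖y'‖ * ‖y - y'‖ := by ring

end IsVISolution

theorem stmt_7_general {d : ℕ} (A : Set (EuclideanSpace ℝ (Fin d)))
    (M : EuclideanSpace ℝ (Fin d) → EuclideanSpace ℝ (Fin d))
    (hmono : ∀ x ∈ A, ∀ y ∈ A, 0 ≤ ⟪M x - M y, x - y⟫)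
    (yfun : ℝ → EuclideanSpace ℝ (Fin d))
    (hy : ∀ ε > (0 : ℝ), yfun ε ∈ A ∧ ∀ z ∈ A, 0 ≤ ⟪M (yfun ε) + ε • yfun ε, z - yfun ε⟫)
    (My : ℝ) (hMy : ∀ ε > (0 : ℝ), ‖yfun ε‖ ≤ My)
    (ε ε' : ℝ) (hε : 0 < ε) (hεε' : ε ≤ ε') :
    ‖yfun ε - yfun ε'‖ ≤ My * (ε' - ε) / ε := by
  have hε' : 0 < ε' := hε.trans_le hεε'
  have hdrift : ε * ‖yfun ε - yfun ε'‖ ≤ (ε' - ε) * ‖yfun ε'‖ :=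
    IsVISolution.tikhonov_mul_norm_sub_le hmono (hy ε hε) (hy ε' hε') hεε'
  rw [le_div_iff₀ hε]
  calc ‖yfun ε - yfun ε'‖ * ε ≤ (ε' - ε) * ‖yfun ε'‖ := by linarith
    _ ≤ (ε' - ε) * My := mul_le_mul_of_nonneg_left (hMy ε' hε') (sub_nonneg.2 hεε')
    _ = My * (ε' - ε) := mul_comm _ _

theorem stmt_7 {d : ℕ} (A : Set (EuclideanSpace ℝ (Fin d)))
    (hA_ne : A.Nonempty) (hA_closed : IsClosed A) (hA_convex : Convex ℝ A)
    (M : EuclideanSpace ℝ (Fin d) → EuclideanSpace ℝ (Fin d))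
    (L : ℝ) (hLip : ∀ x y, ‖M x - M y‖ ≤ L * ‖x - y‖)
    (hmono : ∀ x ∈ A, ∀ y ∈ A, 0 ≤ ⟪M x - M y, x - y⟫)
    (hSOL : ∃ x ∈ A, ∀ z ∈ A, 0 ≤ ⟪M x, z - x⟫)
    (yfun : ℝ → EuclideanSpace ℝ (Fin d))
    (hy : ∀ ε > (0 : ℝ), yfun ε ∈ A ∧ ∀ z ∈ A, 0 ≤ ⟪M (yfun ε) + ε • yfun ε, z - yfun ε⟫)
    (My : ℝ) (hMy : ∀ ε > (0 : ℝ), ‖yfun ε‖ ≤ My)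
    (ε ε' : ℝ) (hε : 0 < ε) (hεε' : ε ≤ ε') :
    ‖yfun ε - yfun ε'‖ ≤ My * (ε' - ε) / ε :=
  stmt_7_general A M hmono yfun hy My hMy ε ε' hε hεε'
end

section
/- Let A ⊆ ℝᵈ be closed and convex, M : ℝᵈ → ℝᵈ monotone on A, and let μ, y ∈ A, β > 0, ε > 0. Suppose y = Proj_A[y - β(M(y) + εy)] and let μ⁺ = Proj_A[μ - β(M(μ) + q + r + εμ)] for vectors q, r ∈ ℝᵈ. Then ‖μ⁺ - y‖² ≤ (1 - 2βε)‖μ - y‖² - 2β(q + r, μ - y) + β²‖ε(μ - y) + M(μ) - M(y) + q + r‖². -/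
/-! Write `u = μ - β (M μ + q + r + ε μ)` and `v = y - β (M y + ε y)`, so that `μ⁺` and `y` are the
projections of `u` and `v` onto `A`. Projection onto a convex set is nonexpansive, hence
`‖μ⁺ - y‖ ≤ ‖u - v‖ = ‖(μ - y) - β g‖` with `g = ε (μ - y) + (M μ - M y) + q + r`. Expanding the square,
the cross term `-2β ⟪M μ - M y, μ - y⟫` is nonpositive by monotonicity and can be dropped. -/

open RealInnerProductSpace

section Projection

variable {E : Type*} [NormedAddCommGroup E] [InnerProductSpace ℝ E] {K : Set E}

theorem real_inner_sub_nonpos_of_forall_norm_sub_le (hK : Convex ℝ K) {u v : E} (hv : v ∈ K)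
    (hmin : ∀ z ∈ K, ‖u - v‖ ≤ ‖u - z‖) {w : E} (hw : w ∈ K) : ⟪u - v, w - v⟫ ≤ 0 := by
  have : Nonempty K := ⟨⟨v, hv⟩⟩
  have hinf : ‖u - v‖ = ⨅ z : K, ‖u - z‖ :=
    le_antisymm (le_ciInf fun z => hmin z z.2)
      (ciInf_le ⟨0, fun _ ⟨_, hz⟩ => hz ▸ norm_nonneg _⟩ (⟨v, hv⟩ : K))
  exact (norm_eq_iInf_iff_real_inner_le_zero hK hv).mp hinf w hw

/-- Firm nonexpansiveness of the projection onto a convex set. -/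
theorem norm_sub_sq_le_real_inner_of_forall_norm_sub_le (hK : Convex ℝ K) {u u' p p' : E}
    (hp : p ∈ K) (hp' : p' ∈ K) (hmin : ∀ z ∈ K, ‖u - p‖ ≤ ‖u - z‖)
    (hmin' : ∀ z ∈ K, ‖u' - p'‖ ≤ ‖u' - z‖) : ‖p - p'‖ ^ 2 ≤ ⟪u - u', p - p'⟫ := by
  have h := real_inner_sub_nonpos_of_forall_norm_sub_le hK hp hmin hp'
  have h' := real_inner_sub_nonpos_of_forall_norm_sub_le hK hp' hmin' hp
  have hsplit : ⟪u - u', p - p'⟫ = ‖p - p'‖ ^ 2 - ⟪u - p, p' - p⟫ - ⟪u' - p', p - p'⟫ := by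
    rw [← real_inner_self_eq_norm_sq]
    simp only [inner_sub_left, inner_sub_right]
    ring
  linarith

theorem norm_sub_le_of_forall_norm_sub_le (hK : Convex ℝ K) {u u' p p' : E}
    (hp : p ∈ K) (hp' : p' ∈ K) (hmin : ∀ z ∈ K, ‖u - p‖ ≤ ‖u - z‖)
    (hmin' : ∀ z ∈ K, ‖u' - p'‖ ≤ ‖u' - z‖) : ‖p - p'‖ ≤ ‖u - u'‖ := by
  rcases (norm_nonneg (p - p')).eq_or_lt with h0 | hpos
  · exact h0 ▸ norm_nonneg _
  · refine le_of_mul_le_mul_right ?_ hpos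
    calc ‖p - p'‖ * ‖p - p'‖ = ‖p - p'‖ ^ 2 := (sq _).symm
      _ ≤ ⟪u - u', p - p'⟫ :=
        norm_sub_sq_le_real_inner_of_forall_norm_sub_le hK hp hp' hmin hmin'
      _ ≤ ‖u - u'‖ * ‖p - p'‖ := real_inner_le_norm _ _

end Projection

theorem stmt_17_general {d : ℕ} (A : Set (EuclideanSpace ℝ (Fin d)))
    (hA_convex : Convex ℝ A)
    (M : EuclideanSpace ℝ (Fin d) → EuclideanSpace ℝ (Fin d))
    (hmono : ∀ x ∈ A, ∀ y ∈ A, 0 ≤ ⟪M x - M y, x - y⟫)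
    (μ y μplus q r : EuclideanSpace ℝ (Fin d)) (hμ : μ ∈ A) (hy : y ∈ A)
    (β ε : ℝ) (hβ : 0 < β)
    -- `y` is the projection of `y - β (M y + ε y)` onto `A` (i.e. a fixed point):
    (hyfix : ∀ z ∈ A,
      ‖(y - β • (M y + ε • y)) - y‖ ≤ ‖(y - β • (M y + ε • y)) - z‖)
    -- `μplus` is the projection of `μ - β (M μ + q + r + ε μ)` onto `A`:
    (hμplus : μplus ∈ A)
    (hμplus_proj : ∀ z ∈ A,
      ‖(μ - β • (M μ + q + r + ε • μ)) - μplus‖ ≤ ‖(μ - β • (M μ + q + r + ε • μ)) - z‖) :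
    ‖μplus - y‖ ^ 2 ≤ (1 - 2 * β * ε) * ‖μ - y‖ ^ 2 - 2 * β * ⟪q + r, μ - y⟫
      + β ^ 2 * ‖ε • (μ - y) + (M μ - M y) + q + r‖ ^ 2 := by
  set g := ε • (μ - y) + (M μ - M y) + q + r
  have hdiff : (μ - β • (M μ + q + r + ε • μ)) - (y - β • (M y + ε • y)) = (μ - y) - β • g := by
    simp only [g, smul_add, smul_sub, smul_smul]
    abel
  have hnonexp : ‖μplus - y‖ ≤ ‖(μ - y) - β • g‖ :=
    hdiff ▸ norm_sub_le_of_forall_norm_sub_le hA_convex hμplus hy hμplus_proj hyfix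
  have hexpand : ‖(μ - y) - β • g‖ ^ 2
      = ‖μ - y‖ ^ 2 - 2 * β * ⟪g, μ - y⟫ + β ^ 2 * ‖g‖ ^ 2 := by
    rw [norm_sub_sq_real, real_inner_smul_right, norm_smul, Real.norm_eq_abs, mul_pow, sq_abs,
      real_inner_comm]
    ring
  have hinner : ⟪g, μ - y⟫ = ε * ‖μ - y‖ ^ 2 + ⟪M μ - M y, μ - y⟫ + ⟪q + r, μ - y⟫ := by
    simp only [g, inner_add_left, real_inner_smul_left, real_inner_self_eq_norm_sq]
    ring
  have hmono_term : 0 ≤ β * ⟪M μ - M y, μ - y⟫ := mul_nonneg hβ.le (hmono μ hμ y hy)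
  have hsq := pow_le_pow_left₀ (norm_nonneg _) hnonexp 2
  rw [hexpand, hinner] at hsq
  linarith

theorem stmt_17 {d : ℕ} (A : Set (EuclideanSpace ℝ (Fin d)))
    (hA_closed : IsClosed A) (hA_convex : Convex ℝ A)
    (M : EuclideanSpace ℝ (Fin d) → EuclideanSpace ℝ (Fin d))
    (hmono : ∀ x ∈ A, ∀ y ∈ A, 0 ≤ ⟪M x - M y, x - y⟫)
    (μ y μplus q r : EuclideanSpace ℝ (Fin d)) (hμ : μ ∈ A) (hy : y ∈ A)
    (β ε : ℝ) (hβ : 0 < β) (hε : 0 < ε)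
    -- `y` is the projection of `y - β (M y + ε y)` onto `A` (i.e. a fixed point):
    (hyfix : ∀ z ∈ A,
      ‖(y - β • (M y + ε • y)) - y‖ ≤ ‖(y - β • (M y + ε • y)) - z‖)
    -- `μplus` is the projection of `μ - β (M μ + q + r + ε μ)` onto `A`:
    (hμplus : μplus ∈ A)
    (hμplus_proj : ∀ z ∈ A,
      ‖(μ - β • (M μ + q + r + ε • μ)) - μplus‖ ≤ ‖(μ - β • (M μ + q + r + ε • μ)) - z‖) :
    ‖μplus - y‖ ^ 2 ≤ (1 - 2 * β * ε) * ‖μ - y‖ ^ 2 - 2 * β * ⟪q + r, μ - y⟫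
      + β ^ 2 * ‖ε • (μ - y) + (M μ - M y) + q + r‖ ^ 2 :=
  stmt_17_general A hA_convex M hmono μ y μplus q r hμ hy β ε hβ hyfix hμplus hμplus_proj
end
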